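/- Let γ be a closed C² curve in ℝ³ of length 2π parametrized by arclength with curvature κ(s). Let U(s) be its unit tangent and suppose each component of U vanishes at least once on [0, 2π]. Then for every 2π-periodic Φ ∈ H¹, ∫₀^{2π}(Φ'(s)² + κ(s)²Φ(s)²) ds ≥ (1/4)∫₀^{2π} Φ(s)² ds; i.e., the lowest eigenvalue of -d²/ds² + κ² is at least 1/4. -/

import Mathlib

open Real MeasureTheory intervalIntegral

open Filter Set Topology

open scoped RealInnerProductSpace

/-!
Write `X = Φ U`. Since `‖U‖ = 1` forces `⟪U, U'⟫ = 0`, one has `‖X‖² = Φ²` and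
`‖X'‖² = Φ'² + κ²Φ²`, so the claim is the Wirtinger inequality `∫ ‖X'‖² ≥ ¼ ∫ ‖X‖²` for a
`2π`-periodic `X` each of whose components vanishes somewhere. Componentwise, shifting by a zero
and using periodicity, this is the Dirichlet inequality `∫ f'² ≥ (π / L)² ∫ f²` for `f` vanishing
at both ends of an interval of length `L`. That one follows from Picone's identity
`f'² - k² f² = (f' - c f)² + (c f²)'` with `c = k cot (k (t - a))`, which solves the Riccati
equation `c' + c² + k² = 0`; the boundary term `c f²` tends to `0` at both ends because `f`
vanishes there to first order.
-/

theorem sub_le_integral_of_riccati {f f' c : ℝ → ℝ} {a b μ : ℝ} (hab : a ≤ b)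
    (hcont : ContinuousOn (fun t => c t * f t ^ 2) (Icc a b))
    (hf : ∀ t ∈ Ioo a b, HasDerivAt f (f' t) t)
    (hc : ∀ t ∈ Ioo a b, HasDerivAt c (-(μ + c t ^ 2)) t)
    (hint : IntegrableOn (fun t => f' t ^ 2 - μ * f t ^ 2) (Icc a b)) :
    c b * f b ^ 2 - c a * f a ^ 2 ≤ ∫ t in a..b, (f' t ^ 2 - μ * f t ^ 2) := by
  refine sub_le_integral_of_hasDeriv_right_of_le hab hcont
    (fun t ht => ((hc t ht).mul ((hf t ht).fun_pow 2)).hasDerivWithinAt) hint fun t ht => ?_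
  push_cast
  -- Picone: `f'² - μ f² - (c f²)' = (f' - c f)²`
  nlinarith [sq_nonneg (f' t - c t * f t)]

theorem continuousAt_div_mul_sq_of_hasDerivAt {f g h : ℝ → ℝ} {p f' h' : ℝ}
    (hf : HasDerivAt f f' p) (hfp : f p = 0) (hh : HasDerivAt h h' p) (hhp : h p = 0)
    (hh' : h' ≠ 0) (hg : ContinuousAt g p) :
    ContinuousAt (fun t => g t / h t * f t ^ 2) p := by
  rw [← continuousWithinAt_compl_self, ContinuousWithinAt, hfp, zero_pow two_ne_zero, mul_zero]
  have hlim : Tendsto (fun t => g t * (slope f p t / slope h p t) * f t) (𝓝[≠] p)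
      (𝓝 (g p * (f' / h') * f p)) :=
    ((hg.tendsto.mono_left nhdsWithin_le_nhds).mul
      ((hasDerivAt_iff_tendsto_slope.mp hf).div (hasDerivAt_iff_tendsto_slope.mp hh) hh')).mul
      (hf.continuousAt.tendsto.mono_left nhdsWithin_le_nhds)
  rw [hfp, mul_zero] at hlim
  refine hlim.congr' ?_
  filter_upwards [self_mem_nhdsWithin] with t (ht : t ≠ p)
  have htp : t - p ≠ 0 := sub_ne_zero.mpr ht
  rw [slope_def_field, slope_def_field, hfp, hhp, sub_zero, sub_zero, div_div_div_cancel_right₀ htp]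
  ring

theorem hasDerivAt_mul_cos_div_sin {k a t : ℝ} (ht : sin (k * (t - a)) ≠ 0) :
    HasDerivAt (fun t => k * cos (k * (t - a)) / sin (k * (t - a)))
      (-(k ^ 2 + (k * cos (k * (t - a)) / sin (k * (t - a))) ^ 2)) t := by
  have hlin : HasDerivAt (fun t => k * (t - a)) k t := by
    simpa using ((hasDerivAt_id t).sub_const a).const_mul k
  refine ((hlin.cos.const_mul k).div hlin.sin ht).congr_deriv ?_
  field_simp
  ring

theorem sq_pi_div_mul_integral_sq_le_integral_deriv_sq {f f' : ℝ → ℝ} {a b : ℝ} (hab : a < b)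
    (hf : ∀ t ∈ Icc a b, HasDerivAt f (f' t) t) (ha : f a = 0) (hb : f b = 0)
    (hint : IntervalIntegrable (fun t => f' t ^ 2) volume a b) :
    (π / (b - a)) ^ 2 * ∫ t in a..b, f t ^ 2 ≤ ∫ t in a..b, f' t ^ 2 := by
  set k := π / (b - a)
  have hk : k * (b - a) = π := div_mul_cancel₀ _ (sub_ne_zero.2 hab.ne')
  have hk0 : 0 < k := div_pos pi_pos (sub_pos.2 hab)
  have hsin : ∀ t, HasDerivAt (fun t => sin (k * (t - a))) (k * cos (k * (t - a))) t := fun t => by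
    simpa [mul_comm] using (((hasDerivAt_id t).sub_const a).const_mul k).sin
  have hsin_pos : ∀ t ∈ Ioo a b, 0 < sin (k * (t - a)) := fun t ht =>
    sin_pos_of_pos_of_lt_pi (by nlinarith [ht.1]) (by nlinarith [ht.2])
  have hcos : Continuous fun t => k * cos (k * (t - a)) := by fun_prop
  have hcont : ContinuousOn (fun t => k * cos (k * (t - a)) / sin (k * (t - a)) * f t ^ 2)
      (Icc a b) := by
    intro t ht
    refine ContinuousAt.continuousWithinAt ?_
    rcases ht.1.eq_or_lt with rfl | hat
    · exact continuousAt_div_mul_sq_of_hasDerivAt (hf _ ht) ha (hsin _) (by simp)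
        (by simp [hk0.ne']) hcos.continuousAt
    rcases ht.2.eq_or_lt with rfl | htb
    · exact continuousAt_div_mul_sq_of_hasDerivAt (hf _ ht) hb (hsin _) (by simp [hk])
        (by simp [hk, hk0.ne']) hcos.continuousAt
    exact (hcos.continuousAt.div (hsin t).continuousAt (hsin_pos t ⟨hat, htb⟩).ne').mul
      ((hf t ht).continuousAt.pow 2)
  have hsq : IntervalIntegrable (fun t => f t ^ 2) volume a b :=
    (ContinuousOn.pow (fun t ht => (hf t ht).continuousAt.continuousWithinAt) 2)
      |>.intervalIntegrable_of_Icc hab.le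
  have key := sub_le_integral_of_riccati hab.le hcont (fun t ht => hf t (Ioo_subset_Icc_self ht))
    (fun t ht => hasDerivAt_mul_cos_div_sin (hsin_pos t ht).ne')
    ((intervalIntegrable_iff_integrableOn_Icc_of_le hab.le).1 (hint.sub (hsq.const_mul _)))
  rw [ha, hb, integral_sub hint (hsq.const_mul _), intervalIntegral.integral_const_mul] at key
  linarith

theorem Function.Periodic.deriv {f : ℝ → ℝ} {T : ℝ} (hf : Function.Periodic f T) :
    Function.Periodic (deriv f) T := fun x => by
  rw [← deriv_comp_add_const, show (fun y => f (y + T)) = f from funext hf]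

theorem Function.Periodic.sq_pi_div_mul_integral_sq_le_integral_deriv_sq {f f' : ℝ → ℝ}
    {T : ℝ} (hT : 0 < T) (hper : Function.Periodic f T) (hf : ∀ t, HasDerivAt f (f' t) t)
    (hint : IntervalIntegrable (fun t => f' t ^ 2) volume 0 T) (hzero : ∃ s, f s = 0) :
    (π / T) ^ 2 * ∫ t in 0..T, f t ^ 2 ≤ ∫ t in 0..T, f' t ^ 2 := by
  obtain ⟨s, hs⟩ := hzero
  have hf' : f' = _root_.deriv f := funext fun t => (hf t).deriv.symm
  have hper' : Function.Periodic (fun t => f' t ^ 2) T := hf' ▸ hper.deriv.comp (· ^ 2)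
  have hper2 : Function.Periodic (fun t => f t ^ 2) T := hper.comp (· ^ 2)
  have key := _root_.sq_pi_div_mul_integral_sq_le_integral_deriv_sq (lt_add_of_pos_right s hT)
    (fun t _ => hf t) hs (by rw [hper, hs])
    (hper'.intervalIntegrable₀ hT.ne' (by simpa using hint) s (s + T))
  simpa only [add_sub_cancel_left, hper2.intervalIntegral_add_eq s 0,
    hper'.intervalIntegral_add_eq s 0, zero_add] using key

theorem integral_norm_sq_eq_sum {ι : Type*} [Fintype ι] {X : ℝ → EuclideanSpace ℝ ι} {a b : ℝ}
    (hX : ∀ i, IntervalIntegrable (fun t => X t i ^ 2) volume a b) :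
    ∫ t in a..b, ‖X t‖ ^ 2 = ∑ i, ∫ t in a..b, X t i ^ 2 := by
  rw [← intervalIntegral.integral_finsetSum fun i _ => hX i]
  simp only [EuclideanSpace.norm_sq_eq, Real.norm_eq_abs, sq_abs]

theorem Function.Periodic.sq_pi_div_mul_integral_norm_sq_le_integral_norm_deriv_sq
    {ι : Type*} [Fintype ι] {X X' : ℝ → EuclideanSpace ℝ ι} {T : ℝ} (hT : 0 < T)
    (hper : Function.Periodic X T) (hX : ∀ t, HasDerivAt X (X' t) t)
    (hint : IntervalIntegrable (fun t => ‖X' t‖ ^ 2) volume 0 T) (hzero : ∀ i, ∃ s, X s i = 0) :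
    (π / T) ^ 2 * ∫ t in 0..T, ‖X t‖ ^ 2 ≤ ∫ t in 0..T, ‖X' t‖ ^ 2 := by
  have hXi : ∀ i t, HasDerivAt (fun t => X t i) (X' t i) t := fun i t =>
    by simpa [Function.comp_def] using (EuclideanSpace.proj i).hasFDerivAt.comp_hasDerivAt t (hX t)
  have hint_i : ∀ i, IntervalIntegrable (fun t => X' t i ^ 2) volume 0 T := fun i => by
    refine hint.mono_fun ?_ (ae_of_all _ fun t => ?_)
    · have : (fun t => X' t i) = _root_.deriv (fun t => X t i) :=
        funext fun t => (hXi i t).deriv.symm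
      exact (this ▸ measurable_deriv _).pow_const 2 |>.aestronglyMeasurable
    · simpa only [Real.norm_eq_abs, abs_pow, sq_abs, abs_norm] using
        pow_le_pow_left₀ (norm_nonneg _) (PiLp.norm_apply_le (X' t) i) 2
  have hcont_i : ∀ i, IntervalIntegrable (fun t => X t i ^ 2) volume 0 T := fun i =>
    (continuous_iff_continuousAt.2 fun t => (hXi i t).continuousAt).pow 2 |>.intervalIntegrable _ _
  rw [integral_norm_sq_eq_sum hcont_i, integral_norm_sq_eq_sum hint_i, Finset.mul_sum]
  exact Finset.sum_le_sum fun i _ =>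
    (hper.comp (· i)).sq_pi_div_mul_integral_sq_le_integral_deriv_sq hT (hXi i) (hint_i i) (hzero i)

theorem HasDerivAt.inner_eq_zero_of_forall_norm_eq {E : Type*} [NormedAddCommGroup E]
    [InnerProductSpace ℝ E] {U : ℝ → E} {U' : E} {t r : ℝ} (hU : HasDerivAt U U' t)
    (hnorm : ∀ s, ‖U s‖ = r) : ⟪U t, U'⟫ = 0 := by
  have h := hU.norm_sq
  simp only [hnorm] at h
  linarith [h.unique (hasDerivAt_const t (r ^ 2))]

theorem norm_smul_add_smul_sq_of_forall_norm_eq_one {E : Type*} [NormedAddCommGroup E]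
    [InnerProductSpace ℝ E] {U : ℝ → E} {U' : E} {t : ℝ} (hU : HasDerivAt U U' t)
    (hunit : ∀ s, ‖U s‖ = 1) (a b : ℝ) :
    ‖a • U t + b • U'‖ ^ 2 = a ^ 2 + b ^ 2 * ‖U'‖ ^ 2 := by
  rw [norm_add_sq_real, norm_smul, norm_smul, inner_smul_left, inner_smul_right,
    hU.inner_eq_zero_of_forall_norm_eq hunit, hunit, Real.norm_eq_abs, Real.norm_eq_abs]
  simp only [mul_pow, sq_abs, conj_trivial]
  ring

/-- For a closed `C²` curve of length `2π` with unit tangent `U` (each component of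
which vanishes somewhere) and curvature `κ = |U'|`, the lowest eigenvalue of
`-d²/ds² + κ²` on `2π`-periodic functions is at least `1/4`:
`∫ (Φ'² + κ²Φ²) ≥ (1/4)∫ Φ²` for every `2π`-periodic `H¹` function `Φ`. -/
theorem quarter_lower_bound
    (U : ℝ → EuclideanSpace ℝ (Fin 3)) (κ : ℝ → ℝ)
    (hU : ContDiff ℝ 1 U) (hUper : Function.Periodic U (2 * π))
    (hunit : ∀ s, ‖U s‖ = 1)
    (hκ : ∀ s, κ s = ‖deriv U s‖)
    (hvanish : ∀ i : Fin 3, ∃ s ∈ Set.Icc (0:ℝ) (2 * π), U s i = 0)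
    (Φ Φ' : ℝ → ℝ)
    (hΦper : Function.Periodic Φ (2 * π))
    (hΦderiv : ∀ s, HasDerivAt Φ (Φ' s) s)
    (hΦL2 : IntervalIntegrable (fun s => (Φ' s) ^ 2) volume 0 (2 * π)) :
    (∫ s in (0:ℝ)..(2 * π), ((Φ' s) ^ 2 + (κ s) ^ 2 * (Φ s) ^ 2)) ≥
      (1/4) * ∫ s in (0:ℝ)..(2 * π), (Φ s) ^ 2 := by
  have hUd : ∀ s, HasDerivAt U (deriv U s) s := fun s =>
    ((hU.differentiable one_ne_zero) s).hasDerivAt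
  have hX : ∀ s, HasDerivAt (fun s => Φ s • U s) (Φ' s • U s + Φ s • deriv U s) s := fun s =>
    ((hΦderiv s).smul (hUd s)).congr_deriv (add_comm _ _)
  have hXnorm : ∀ s, ‖Φ s • U s‖ ^ 2 = Φ s ^ 2 := fun s => by
    rw [norm_smul, hunit, mul_one, Real.norm_eq_abs, sq_abs]
  have hX'norm : ∀ s, ‖Φ' s • U s + Φ s • deriv U s‖ ^ 2 = Φ' s ^ 2 + κ s ^ 2 * Φ s ^ 2 :=
    fun s => by rw [norm_smul_add_smul_sq_of_forall_norm_eq_one (hUd s) hunit, hκ]; ring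
  have hκc : Continuous κ := (funext hκ) ▸ (hU.continuous_deriv le_rfl).norm
  have hΦc : Continuous Φ := continuous_iff_continuousAt.2 fun s => (hΦderiv s).continuousAt
  have hXper : Function.Periodic (fun s => Φ s • U s) (2 * π) := fun s => by
    simp only [hΦper s, hUper s]
  have key := hXper.sq_pi_div_mul_integral_norm_sq_le_integral_norm_deriv_sq two_pi_pos hX
    (by simpa only [hX'norm] using
      hΦL2.add ((by fun_prop : Continuous fun s => κ s ^ 2 * Φ s ^ 2).intervalIntegrable _ _))
    fun i => (hvanish i).imp fun s hs => by simp [hs.2]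
  simp only [hXnorm, hX'norm] at key
  rw [ge_iff_le, show (1 / 4 : ℝ) = (π / (2 * π)) ^ 2 by field_simp; norm_num]
  exact key
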